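/- Let (Ω, 𝔽, μ) be a probability space, H a real separable Hilbert space, and X, X_1, …, X_n independent and identically distributed strongly measurable H-valued random elements with E‖X‖⁴ < ∞ and mean m = ∫ X dμ. Let Γ : H → H be the covariance operator Γx = ∫ ⟨X(ω) − m, x⟩(X(ω) − m) dμ(ω), and let Γ̃_n be the random operator Γ̃_n x = (1/n) Σ_{i=1}^n ⟨X_i − m, x⟩ (X_i − m). Then for any Hilbert basis (φ_j)_{j≥1} of H: Σ_{j=1}^∞ E‖(Γ̃_n − Γ)φ_j‖² ≤ (1/n) · E‖X − m‖⁴. -/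

import Mathlib

open MeasureTheory ProbabilityTheory RealInnerProductSpace
open scoped ENNReal

lemma aux_integrable_inner {α H : Type*} [MeasurableSpace α] {μ : Measure α}
    [NormedAddCommGroup H] [InnerProductSpace ℝ H]
    {f g : α → H} (hf : MemLp f 2 μ) (hg : MemLp g 2 μ) :
    Integrable (fun ω => ⟪f ω, g ω⟫) μ := by
  have h := L2.integrable_inner (𝕜 := ℝ) (hf.toLp f) (hg.toLp g)
  refine h.congr ?_
  filter_upwards [hf.coeFn_toLp, hg.coeFn_toLp] with ω h1 h2
  rw [h1, h2]

lemma aux_indep_integral_inner {Ω H : Type*} [MeasurableSpace Ω] {μ : Measure Ω}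
    [IsProbabilityMeasure μ]
    [NormedAddCommGroup H] [InnerProductSpace ℝ H] [CompleteSpace H]
    [MeasurableSpace H] [BorelSpace H] [TopologicalSpace.SeparableSpace H]
    {f g : Ω → H} (hfm : Measurable f) (hgm : Measurable g)
    (hfi : Integrable f μ) (hgi : Integrable g μ) (hfg : IndepFun f g μ) :
    ∫ ω, ⟪f ω, g ω⟫ ∂μ = ⟪∫ ω, f ω ∂μ, ∫ ω, g ω ∂μ⟫ := by
  have hmap := (indepFun_iff_map_prod_eq_prod_map_map hfm.aemeasurable hgm.aemeasurable).mp hfg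
  have hpm : AEMeasurable (fun ω => (f ω, g ω)) μ := (hfm.prodMk hgm).aemeasurable
  have hcont : Continuous (fun p : H × H => ⟪p.1, p.2⟫) := continuous_inner
  haveI : IsProbabilityMeasure (μ.map f) := Measure.isProbabilityMeasure_map hfm.aemeasurable
  haveI : IsProbabilityMeasure (μ.map g) := Measure.isProbabilityMeasure_map hgm.aemeasurable
  have hfid : Integrable (id : H → H) (μ.map f) :=
    (integrable_map_measure aestronglyMeasurable_id hfm.aemeasurable).mpr hfi
  have hgid : Integrable (id : H → H) (μ.map g) :=
    (integrable_map_measure aestronglyMeasurable_id hgm.aemeasurable).mpr hgi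
  have h1 : ∫ ω, ⟪f ω, g ω⟫ ∂μ = ∫ p : H × H, ⟪p.1, p.2⟫ ∂(μ.map (fun ω => (f ω, g ω))) := by
    rw [integral_map hpm hcont.aestronglyMeasurable]
  rw [h1, hmap]
  have hint : Integrable (fun p : H × H => ⟪p.1, p.2⟫) ((μ.map f).prod (μ.map g)) := by
    have hb : Integrable (fun p : H × H => ‖p.1‖ * ‖p.2‖) ((μ.map f).prod (μ.map g)) :=
      hfid.norm.mul_prod hgid.norm
    refine hb.mono' hcont.aestronglyMeasurable ?_
    refine Filter.Eventually.of_forall fun p => ?_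
    rw [Real.norm_eq_abs]
    exact abs_real_inner_le_norm p.1 p.2

  rw [integral_prod _ hint]
  have h2 : ∀ x : H, ∫ y, ⟪x, y⟫ ∂(μ.map g) = ⟪x, ∫ y, (id y : H) ∂(μ.map g)⟫ :=
    fun x => integral_inner hgid x
  simp_rw [h2]
  have h3 : ∫ x, ⟪x, ∫ y, (id y : H) ∂(μ.map g)⟫ ∂(μ.map f)
      = ⟪∫ x, (id x : H) ∂(μ.map f), ∫ y, (id y : H) ∂(μ.map g)⟫ := by
    have hc : ∀ x : H, ⟪x, ∫ y, (id y : H) ∂(μ.map g)⟫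
        = ⟪∫ y, (id y : H) ∂(μ.map g), x⟫ := fun x => real_inner_comm _ _
    simp only [hc]
    exact integral_inner hfid _
  rw [h3]
  congr 1
  · rw [integral_map hfm.aemeasurable aestronglyMeasurable_id]; rfl
  · rw [integral_map hgm.aemeasurable aestronglyMeasurable_id]; rfl

/-- Mean-squared Hilbert–Schmidt-norm consistency of the population-centered empirical
covariance operator: `E‖Γ̃_n − Γ‖₂² ≤ n⁻¹ E‖X − m‖⁴`. -/
theorem statement11 {Ω : Type*} [MeasurableSpace Ω] (μ : Measure Ω) [IsProbabilityMeasure μ]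
    {H : Type*} [NormedAddCommGroup H] [InnerProductSpace ℝ H]
    [CompleteSpace H] [TopologicalSpace.SeparableSpace H]
    [MeasurableSpace H] [BorelSpace H]
    (n : ℕ) (hn : 0 < n)
    (X : Ω → H) (Xi : Fin n → Ω → H)
    (hXm : StronglyMeasurable X) (hXim : ∀ i, StronglyMeasurable (Xi i))
    (hX4 : MemLp X 4 μ)
    (hindep : iIndepFun Xi μ)
    (hid : ∀ i, IdentDistrib (Xi i) X μ μ)
    (m : H) (hm : m = ∫ ω, X ω ∂μ)
    (Γ : H →L[ℝ] H)
    (hΓ : ∀ x : H, Γ x = ∫ ω, ⟪X ω - m, x⟫ • (X ω - m) ∂μ)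
    (φ : HilbertBasis ℕ ℝ H) :
    ∑' j : ℕ, ∫ ω, ‖(n : ℝ)⁻¹ • (∑ i, ⟪Xi i ω - m, φ j⟫ • (Xi i ω - m)) - Γ (φ j)‖ ^ 2 ∂μ
      ≤ (n : ℝ)⁻¹ * ∫ ω, ‖X ω - m‖ ^ 4 ∂μ := by
  classical
  have hnR : (n : ℝ) ≠ 0 := Nat.cast_ne_zero.mpr hn.ne'
  set Y : Ω → H := fun ω => X ω - m with hYdef
  have hYm : StronglyMeasurable Y := hXm.sub stronglyMeasurable_const
  have hY4 : MemLp Y 4 μ := hX4.sub (memLp_const m)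
  -- ‖Y‖² ∈ L²
  have hYsq2 : MemLp (fun ω => ‖Y ω‖ ^ 2) 2 μ := by
    have h := hY4.norm_rpow_div 2
    have h42 : (4 : ℝ≥0∞) / 2 = 2 := by
      rw [show (4:ℝ≥0∞) = 2*2 by norm_num, mul_div_assoc,
        ENNReal.div_self (by norm_num) (by norm_num), mul_one]
    rw [h42] at h
    have heq : (fun x : Ω => ‖Y x‖ ^ ((2 : ℝ≥0∞)).toReal) = fun x => ‖Y x‖ ^ 2 := by
      funext x
      rw [show ((2 : ℝ≥0∞)).toReal = ((2 : ℕ) : ℝ) by norm_num, Real.rpow_natCast]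
    rwa [heq] at h
  -- ‖Y‖⁴ integrable
  have hInt4 : Integrable (fun ω => ‖Y ω‖ ^ 4) μ := by
    have h := (hY4.norm_rpow (by norm_num) (by norm_num)).integrable le_rfl
    have heq : (fun x : Ω => ‖Y x‖ ^ ((4 : ℝ≥0∞)).toReal) = fun x => ‖Y x‖ ^ 4 := by
      funext x
      rw [show ((4 : ℝ≥0∞)).toReal = ((4 : ℕ) : ℝ) by norm_num, Real.rpow_natCast]
    rwa [heq] at h
  -- integrand integrable for each j
  have hIntg : ∀ j : ℕ, Integrable (fun ω => ⟪Y ω, φ j⟫ ^ 2 * ‖Y ω‖ ^ 2) μ := by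
    intro j
    refine hInt4.mono' ?_ ?_
    · exact (((hYm.inner stronglyMeasurable_const).pow 2).mul
        (hYm.norm.pow 2)).aestronglyMeasurable
    · refine Filter.Eventually.of_forall fun ω => ?_
      have h1 : |⟪Y ω, φ j⟫| ≤ ‖Y ω‖ * ‖φ j‖ := abs_real_inner_le_norm _ _
      have he : ‖φ j‖ = 1 := φ.orthonormal.1 j
      rw [he, mul_one] at h1
      have h2 : ⟪Y ω, φ j⟫ ^ 2 ≤ ‖Y ω‖ ^ 2 := by
        rw [← sq_abs]; exact pow_le_pow_left₀ (abs_nonneg _) h1 2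
      have h3 : (0:ℝ) ≤ ‖Y ω‖ := norm_nonneg _
      rw [Real.norm_eq_abs, abs_of_nonneg (by positivity)]
      nlinarith [sq_nonneg (‖Y ω‖)]
  -- key per-j bound
  have key : ∀ j : ℕ,
      ∫ ω, ‖(n : ℝ)⁻¹ • (∑ i, ⟪Xi i ω - m, φ j⟫ • (Xi i ω - m)) - Γ (φ j)‖ ^ 2 ∂μ
        ≤ (n : ℝ)⁻¹ * ∫ ω, ⟪Y ω, φ j⟫ ^ 2 * ‖Y ω‖ ^ 2 ∂μ := by
    intro j
    set e : H := φ j with hedef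
    have he : ‖e‖ = 1 := φ.orthonormal.1 j
    set u : H → H := fun x => ⟪x - m, e⟫ • (x - m) - Γ e with hudef
    have hucont : Continuous u := by
      have h1 : Continuous fun x : H => x - m := continuous_id.sub continuous_const
      exact ((h1.inner continuous_const).smul h1).sub continuous_const
    have hu : Measurable u := hucont.measurable
    set Z : Ω → H := fun ω => ⟪Y ω, e⟫ • Y ω - Γ e with hZdef
    set Zi : Fin n → Ω → H := fun i ω => ⟪Xi i ω - m, e⟫ • (Xi i ω - m) - Γ e with hZidef
    have hZu : Z = u ∘ X := rfl
    have hZiu : ∀ i, Zi i = u ∘ Xi i := fun i => rfl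
    set V : Ω → H := fun ω => ⟪Y ω, e⟫ • Y ω with hVdef
    have hVm : StronglyMeasurable V := (hYm.inner stronglyMeasurable_const).smul hYm
    have hV2 : MemLp V 2 μ := by
      refine hYsq2.of_le hVm.aestronglyMeasurable ?_
      refine Filter.Eventually.of_forall fun ω => ?_
      rw [norm_smul, Real.norm_eq_abs (‖Y ω‖^2), abs_of_nonneg (by positivity)]
      calc ‖⟪Y ω, e⟫‖ * ‖Y ω‖ ≤ (‖Y ω‖ * ‖e‖) * ‖Y ω‖ := by
            gcongr; exact abs_real_inner_le_norm _ _
        _ = ‖Y ω‖ ^ 2 := by rw [he]; ring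
    have hZ2 : MemLp Z 2 μ := hV2.sub (memLp_const (Γ e))
    have hVint : Integrable V μ := hV2.integrable one_le_two
    have hEV : ∫ ω, V ω ∂μ = Γ e := (hΓ e).symm
    have hEZ : ∫ ω, Z ω ∂μ = 0 := by
      rw [hZdef]
      have : (fun ω => ⟪Y ω, e⟫ • Y ω - Γ e) = fun ω => V ω - Γ e := rfl
      rw [this, integral_sub hVint (integrable_const _), hEV, integral_const]
      simp
    have hZid : ∀ i, IdentDistrib (Zi i) Z μ μ := by
      intro i
      rw [hZu, hZiu i]
      exact (hid i).comp hu
    have hZi2 : ∀ i, MemLp (Zi i) 2 μ := fun i => (hZid i).symm.memLp_snd hZ2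
    have hEZi : ∀ i, ∫ ω, Zi i ω ∂μ = 0 := fun i => by
      rw [(hZid i).integral_eq, hEZ]
    have hinner_int : ∀ i k : Fin n, Integrable (fun ω => ⟪Zi i ω, Zi k ω⟫) μ :=
      fun i k => aux_integrable_inner (hZi2 i) (hZi2 k)
    have hcross : ∀ i k : Fin n, i ≠ k → ∫ ω, ⟪Zi i ω, Zi k ω⟫ ∂μ = 0 := by
      intro i k hik
      have hind : IndepFun (Zi i) (Zi k) μ := by
        rw [hZiu i, hZiu k]
        exact (hindep.indepFun hik).comp hu hu
      have heq := aux_indep_integral_inner (f := u ∘ Xi i) (g := u ∘ Xi k)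
        (hu.comp (hXim i).measurable) (hu.comp (hXim k).measurable)
        ((hZi2 i).integrable one_le_two) ((hZi2 k).integrable one_le_two) hind
      have heq2 : ∫ ω, ⟪Zi i ω, Zi k ω⟫ ∂μ = ⟪∫ ω, Zi i ω ∂μ, ∫ ω, Zi k ω ∂μ⟫ := heq
      rw [heq2, hEZi i, hEZi k, inner_zero_left]
    have hdiag : ∀ i : Fin n, ∫ ω, ⟪Zi i ω, Zi i ω⟫ ∂μ = ∫ ω, ‖Z ω‖ ^ 2 ∂μ := by
      intro i
      have h1 : ∀ ω, ⟪Zi i ω, Zi i ω⟫ = ‖Zi i ω‖ ^ 2 := fun ω => real_inner_self_eq_norm_sq _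
      simp only [h1]
      have h2 : IdentDistrib (fun ω => ‖Zi i ω‖ ^ 2) (fun ω => ‖Z ω‖ ^ 2) μ μ :=
        (hZid i).comp ((measurable_norm).pow_const 2)
      exact h2.integral_eq
    -- rewrite the integrand
    have hrw : ∀ ω, (n : ℝ)⁻¹ • (∑ i, ⟪Xi i ω - m, e⟫ • (Xi i ω - m)) - Γ e
        = (n : ℝ)⁻¹ • ∑ i, Zi i ω := by
      intro ω
      have hs : ∑ i : Fin n, Zi i ω
          = (∑ i : Fin n, ⟪Xi i ω - m, e⟫ • (Xi i ω - m)) - (n : ℝ) • Γ e := by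
        rw [hZidef]
        rw [Finset.sum_sub_distrib, Finset.sum_const, Finset.card_univ, Fintype.card_fin]
        congr 1
        rw [← Nat.cast_smul_eq_nsmul ℝ]
      rw [hs, smul_sub, smul_smul, inv_mul_cancel₀ hnR, one_smul]
    have hmain : ∫ ω, ‖(n : ℝ)⁻¹ • (∑ i, ⟪Xi i ω - m, e⟫ • (Xi i ω - m)) - Γ e‖ ^ 2 ∂μ
        = (n : ℝ)⁻¹ * ∫ ω, ‖Z ω‖ ^ 2 ∂μ := by
      have h1 : ∀ ω, ‖(n : ℝ)⁻¹ • (∑ i, ⟪Xi i ω - m, e⟫ • (Xi i ω - m)) - Γ e‖ ^ 2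
          = ((n:ℝ)⁻¹)^2 * ‖∑ i, Zi i ω‖ ^ 2 := by
        intro ω
        rw [hrw ω, norm_smul, mul_pow, Real.norm_eq_abs, sq_abs]
      simp only [h1]
      rw [integral_const_mul]
      have h2 : ∫ ω, ‖∑ i, Zi i ω‖ ^ 2 ∂μ = ∑ i, ∑ k, ∫ ω, ⟪Zi i ω, Zi k ω⟫ ∂μ := by
        have hexp : ∀ ω, ‖∑ i, Zi i ω‖ ^ 2 = ∑ i, ∑ k, ⟪Zi i ω, Zi k ω⟫ := by
          intro ω
          rw [← real_inner_self_eq_norm_sq, sum_inner]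
          exact Finset.sum_congr rfl fun i _ => inner_sum _ _ _
        simp only [hexp]
        rw [integral_finset_sum _ fun i _ => integrable_finset_sum _ fun k _ => hinner_int i k]
        exact Finset.sum_congr rfl fun i _ => integral_finset_sum _ fun k _ => hinner_int i k
      rw [h2]
      have h3 : ∀ i : Fin n, ∑ k, ∫ ω, ⟪Zi i ω, Zi k ω⟫ ∂μ = ∫ ω, ‖Z ω‖ ^ 2 ∂μ := by
        intro i
        rw [Finset.sum_eq_single i (fun k _ hk => hcross i k (Ne.symm hk))
          (fun h => absurd (Finset.mem_univ i) h)]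
        exact hdiag i
      rw [Finset.sum_congr rfl fun i _ => h3 i, Finset.sum_const, Finset.card_univ,
        Fintype.card_fin, nsmul_eq_mul]
      field_simp
    rw [hmain]
    -- bound ∫‖Z‖² by ∫ g
    have hZle : ∫ ω, ‖Z ω‖ ^ 2 ∂μ ≤ ∫ ω, ⟪Y ω, e⟫ ^ 2 * ‖Y ω‖ ^ 2 ∂μ := by
      have hVnorm : ∀ ω, ‖V ω‖ ^ 2 = ⟪Y ω, e⟫ ^ 2 * ‖Y ω‖ ^ 2 := by
        intro ω
        rw [hVdef]
        simp only []
        rw [norm_smul, mul_pow, Real.norm_eq_abs, sq_abs]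
      have hint1 : Integrable (fun ω => ‖V ω‖ ^ 2) μ := by
        have := aux_integrable_inner hV2 hV2
        refine this.congr ?_
        exact Filter.Eventually.of_forall fun ω => real_inner_self_eq_norm_sq _
      have hint2 : Integrable (fun ω => ⟪V ω, Γ e⟫) μ := hVint.inner_const (Γ e)
      have hexp : ∀ ω, ‖Z ω‖ ^ 2 = ‖V ω‖ ^ 2 - 2 * ⟪V ω, Γ e⟫ + ‖Γ e‖ ^ 2 :=
        fun ω => norm_sub_sq_real _ _
      have hEVinner : ∫ ω, ⟪V ω, Γ e⟫ ∂μ = ‖Γ e‖ ^ 2 := by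
        have hc : ∀ ω, ⟪V ω, Γ e⟫ = ⟪Γ e, V ω⟫ := fun ω => real_inner_comm _ _
        simp only [hc]
        rw [integral_inner hVint, hEV, real_inner_self_eq_norm_sq]
      calc ∫ ω, ‖Z ω‖ ^ 2 ∂μ
          = ∫ ω, (‖V ω‖ ^ 2 - 2 * ⟪V ω, Γ e⟫ + ‖Γ e‖ ^ 2) ∂μ := by simp only [hexp]
        _ = (∫ ω, ‖V ω‖ ^ 2 ∂μ) - 2 * (∫ ω, ⟪V ω, Γ e⟫ ∂μ) + ‖Γ e‖ ^ 2 := by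
            have hint2' : Integrable (fun ω => 2 * ⟪V ω, Γ e⟫) μ := hint2.const_mul 2
            have hint12 : Integrable (fun ω => ‖V ω‖ ^ 2 - 2 * ⟪V ω, Γ e⟫) μ :=
              hint1.sub hint2'
            rw [integral_add hint12 (integrable_const _),
              integral_sub hint1 hint2', MeasureTheory.integral_const_mul, integral_const]
            simp
        _ = (∫ ω, ‖V ω‖ ^ 2 ∂μ) - ‖Γ e‖ ^ 2 := by rw [hEVinner]; ring
        _ ≤ ∫ ω, ‖V ω‖ ^ 2 ∂μ := by nlinarith [sq_nonneg ‖Γ e‖]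
        _ = ∫ ω, ⟪Y ω, e⟫ ^ 2 * ‖Y ω‖ ^ 2 ∂μ := by simp only [hVnorm]
    have : (0:ℝ) ≤ (n:ℝ)⁻¹ := by positivity
    exact mul_le_mul_of_nonneg_left hZle this
  -- sum over a finite set, then take tsum
  refine tsum_le_of_sum_le' ?_ ?_
  · refine mul_nonneg (by positivity) (integral_nonneg fun ω => by positivity)
  · intro F
    calc ∑ j ∈ F, ∫ ω, ‖(n : ℝ)⁻¹ • (∑ i, ⟪Xi i ω - m, φ j⟫ • (Xi i ω - m)) - Γ (φ j)‖ ^ 2 ∂μ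
        ≤ ∑ j ∈ F, (n : ℝ)⁻¹ * ∫ ω, ⟪Y ω, φ j⟫ ^ 2 * ‖Y ω‖ ^ 2 ∂μ :=
          Finset.sum_le_sum fun j _ => key j
      _ = (n : ℝ)⁻¹ * ∑ j ∈ F, ∫ ω, ⟪Y ω, φ j⟫ ^ 2 * ‖Y ω‖ ^ 2 ∂μ := by
          rw [Finset.mul_sum]
      _ = (n : ℝ)⁻¹ * ∫ ω, ∑ j ∈ F, ⟪Y ω, φ j⟫ ^ 2 * ‖Y ω‖ ^ 2 ∂μ := by
          rw [integral_finset_sum F fun j _ => hIntg j]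
      _ ≤ (n : ℝ)⁻¹ * ∫ ω, ‖Y ω‖ ^ 4 ∂μ := by
          refine mul_le_mul_of_nonneg_left ?_ (by positivity)
          refine integral_mono (integrable_finset_sum F fun j _ => hIntg j) hInt4 fun ω => ?_
          rw [← Finset.sum_mul]
          have hb : ∑ j ∈ F, ⟪Y ω, φ j⟫ ^ 2 ≤ ‖Y ω‖ ^ 2 := by
            have h := φ.orthonormal.sum_inner_products_le (x := Y ω) (s := F)
            have hc : ∀ j, ‖⟪φ j, Y ω⟫‖ ^ 2 = ⟪Y ω, φ j⟫ ^ 2 := by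
              intro j
              rw [Real.norm_eq_abs, sq_abs, real_inner_comm]
            calc ∑ j ∈ F, ⟪Y ω, φ j⟫ ^ 2 = ∑ j ∈ F, ‖⟪φ j, Y ω⟫‖ ^ 2 :=
                  Finset.sum_congr rfl fun j _ => (hc j).symm
              _ ≤ ‖Y ω‖ ^ 2 := h
          nlinarith [sq_nonneg (‖Y ω‖), norm_nonneg (Y ω)]
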